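/- arXiv:1509.02888 — 2 statements merged into one kernel-verified Lean document; each statement's English description precedes it below -/
import Mathlib

section
/- With notation as in the construction of η_v: if v ∈ fSe and u ∈ hSg are such that η_v = η_u as functions (same domain, same codomain, same values), then the kernel partition of f equals that of h, the kernel partition of e equals that of g, and v = u·e (left-to-right composition: first u, then e). -/
/-- If v ∈ fSe and u ∈ hSg induce equal maps η_v = η_u (same domain partition,
same codomain partition, same values on blocks), then π_f = π_h, π_e = π_g and
v = u·e. Kernel classes are encoded as sets: K a x = {y | a y = a x}. -/
theorem eta_eq_implies {X : Type*} (e f g h v u : X → X)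
    (he : e ∘ e = e) (hf : f ∘ f = f) (hg : g ∘ g = g) (hh : h ∘ h = h)
    (hv : v = fun x => e (v (f x))) (hu : u = fun x => g (u (h x)))
    (hdom : Set.range (fun x : X => {y : X | f y = f x}) =
            Set.range (fun x : X => {y : X | h y = h x}))
    (hcod : Set.range (fun x : X => {y : X | e y = e x}) =
            Set.range (fun x : X => {y : X | g y = g x}))
    (hval : ∀ x y : X, {z : X | f z = f x} = {z : X | h z = h y} →
        {z : X | e z = e (v (f x))} = {z : X | g z = g (u (h y))}) :
    (∀ x y : X, f x = f y ↔ h x = h y) ∧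
    (∀ x y : X, e x = e y ↔ g x = g y) ∧
    v = fun x => e (u x) := by
  have keyfh : ∀ x : X, {y : X | f y = f x} = {y : X | h y = h x} := by
    intro x
    have hmem : {y : X | f y = f x} ∈ Set.range (fun x : X => {y : X | h y = h x}) := by
      rw [← hdom]; exact ⟨x, rfl⟩
    obtain ⟨x', hx'⟩ := hmem
    have hxm : h x = h x' := by
      have hx : x ∈ {y : X | f y = f x} := rfl
      rw [← hx'] at hx; exact hx
    rw [← hx']
    ext y; simp only [Set.mem_setOf_eq, hxm]
  have keyeg : ∀ x : X, {y : X | e y = e x} = {y : X | g y = g x} := by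
    intro x
    have hmem : {y : X | e y = e x} ∈ Set.range (fun x : X => {y : X | g y = g x}) := by
      rw [← hcod]; exact ⟨x, rfl⟩
    obtain ⟨x', hx'⟩ := hmem
    have hxm : g x = g x' := by
      have hx : x ∈ {y : X | e y = e x} := rfl
      rw [← hx'] at hx; exact hx
    rw [← hx']
    ext y; simp only [Set.mem_setOf_eq, hxm]
  have hfh : ∀ x y : X, f x = f y ↔ h x = h y := by
    intro x y
    constructor
    · intro hxy
      have hx : x ∈ {z : X | f z = f y} := hxy
      rw [keyfh y] at hx; exact hx
    · intro hxy
      have hx : x ∈ {z : X | h z = h y} := hxy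
      rw [← keyfh y] at hx; exact hx
  have heg : ∀ x y : X, e x = e y ↔ g x = g y := by
    intro x y
    constructor
    · intro hxy
      have hx : x ∈ {z : X | e z = e y} := hxy
      rw [keyeg y] at hx; exact hx
    · intro hxy
      have hx : x ∈ {z : X | g z = g y} := hxy
      rw [← keyeg y] at hx; exact hx
  refine ⟨hfh, heg, ?_⟩
  funext x
  have hs := hval x x (keyfh x)
  have h1 : u (h x) ∈ {z : X | g z = g (u (h x))} := rfl
  rw [← hs] at h1
  have h2 : e (u x) = e (u (h x)) := by
    apply (heg _ _).mpr
    conv_lhs => rw [hu]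
    exact congrFun hg (u (h x))
  conv_lhs => rw [hv]
  simp only []
  rw [← h1]
  exact h2.symm
end

section
/- Conversely: if v ∈ fSe and u ∈ hSg with π_f = π_h, π_e = π_g, and v = u·e (first u then e), then η_v = η_u. -/
/-- Conversely: if v ∈ fSe, u ∈ hSg with π_f = π_h, π_e = π_g and v = u·e,
then η_v = η_u (same values on corresponding kernel classes). -/
theorem eta_eq_of_data {X : Type*} (e f g h v u : X → X)
    (he : e ∘ e = e) (hf : f ∘ f = f) (hg : g ∘ g = g) (hh : h ∘ h = h)
    (hv : v = fun x => e (v (f x))) (hu : u = fun x => g (u (h x)))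
    (hfh : ∀ x y : X, f x = f y ↔ h x = h y)
    (heg : ∀ x y : X, e x = e y ↔ g x = g y)
    (hue : v = fun x => e (u x)) :
    ∀ x y : X, {z : X | f z = f x} = {z : X | h z = h y} →
      {z : X | e z = e (v (f x))} = {z : X | g z = g (u (h y))} := by
  intro x y hset
  have e2 : ∀ t, e (e t) = e t := fun t => congrFun he t
  have g2 : ∀ t, g (g t) = g t := fun t => congrFun hg t
  have hu' : ∀ t, u t = g (u (h t)) := fun t => congrFun hu t
  have hue' : ∀ t, v t = e (u t) := fun t => congrFun hue t
  have hxy : h x = h y := by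
    have hx : x ∈ {z : X | f z = f x} := rfl
    rw [hset] at hx; exact hx
  have h1 : h (f x) = h y := by
    have : f (f x) = f x := congrFun hf x
    exact ((hfh (f x) x).mp this).trans hxy
  have key : e (v (f x)) = e (u (h y)) := by
    rw [hue' (f x), e2]
    apply (heg _ _).mpr
    rw [hu' (f x), g2, h1]
  ext z
  simp only [Set.mem_setOf_eq]
  constructor
  · intro hz
    exact (heg z _).mp (hz.trans key)
  · intro hz
    exact ((heg z _).mpr hz).trans key.symm
end
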